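/- For a multi-index α of nonnegative integers, (1/v_n) ∫_{B(0,1)} x^{2α} dx = (∏_{k: α_k≠0} (2α_k−1)!!) / ((n+2|α|)(n+2|α|−2)···(n+2)), where v_n is the volume of the unit ball in ℝ^n. -/

import Mathlib

/-! Let `g(x) = x^{2α}`, homogeneous of degree `d = 2|α|`. Writing `e^{-‖x‖²} = ∫_{‖x‖²}^∞ e^{-s} ds`
and exchanging the integrals, homogeneity gives
`∫_{ℝⁿ} g e^{-‖x‖²} = ∫_0^∞ e^{-s} s^{(n+d)/2} ds · ∫_B g = Γ((n+d)/2 + 1) ∫_B g`,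
while the Gaussian integral on the left factorizes as `∏ᵢ Γ(αᵢ + 1/2)`.
For `α = 0` this is the volume of the ball; dividing the two instances and using
`Γ(k + 1/2) = (2k-1)!! √π / 2^k` and `Γ((n+d)/2 + 1) = Γ(n/2 + 1) ∏_{j ≤ |α|} (n + 2j) / 2^{|α|}`
gives the formula. -/

open MeasureTheory Real Finset Metric Module

lemma lintegral_ofReal_exp_neg_Ioi (a : ℝ) :
    ∫⁻ s in Set.Ioi a, ENNReal.ofReal (exp (-s)) = ENNReal.ofReal (exp (-a)) := by
  rw [← ofReal_integral_eq_lintegral_ofReal (integrableOn_exp_neg_Ioi a)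
    (ae_of_all _ fun s => (exp_pos _).le), integral_exp_neg_Ioi]

lemma lintegral_mul_exp_neg_norm_sq {E : Type*} [NormedAddCommGroup E] [MeasurableSpace E]
    [OpensMeasurableSpace E] (μ : Measure E) [SFinite μ] {f : E → ENNReal} (hf : Measurable f) :
    ∫⁻ x, f x * ENNReal.ofReal (exp (-‖x‖ ^ 2)) ∂μ =
      ∫⁻ s in Set.Ioi 0, ENNReal.ofReal (exp (-s)) * ∫⁻ x in ball 0 √s, f x ∂μ := by
  set F : E × ℝ → ENNReal :=
    {p | ‖p.1‖ ^ 2 < p.2}.indicator fun p => f p.1 * ENNReal.ofReal (exp (-p.2))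
  have hF : Measurable F :=
    ((hf.comp measurable_fst).mul (by fun_prop)).indicator
      (measurableSet_lt (by fun_prop) measurable_snd)
  have integral_s (x : E) :
      ∫⁻ s in Set.Ioi 0, F (x, s) = f x * ENNReal.ofReal (exp (-‖x‖ ^ 2)) := by
    have : (fun s => F (x, s)) =
        (Set.Ioi (‖x‖ ^ 2)).indicator fun s => f x * ENNReal.ofReal (exp (-s)) := by
      ext s
      simp [F, Set.indicator_apply]
    rw [this, lintegral_indicator measurableSet_Ioi, Measure.restrict_restrict measurableSet_Ioi,
      Set.Ioi_inter_Ioi, max_eq_left (by positivity), lintegral_const_mul _ (by fun_prop),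
      lintegral_ofReal_exp_neg_Ioi]
  have integral_x (s : ℝ) :
      ∫⁻ x, F (x, s) ∂μ = ENNReal.ofReal (exp (-s)) * ∫⁻ x in ball 0 √s, f x ∂μ := by
    have : (fun x => F (x, s)) =
        (ball 0 √s).indicator fun x => f x * ENNReal.ofReal (exp (-s)) := by
      ext x
      classical
      simp only [F, Set.indicator_apply, Set.mem_ofPred_eq, mem_ball_zero_iff,
        lt_sqrt (norm_nonneg x)]
    rw [this, lintegral_indicator measurableSet_ball,
      lintegral_mul_const' _ _ ENNReal.ofReal_ne_top, mul_comm]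
  calc ∫⁻ x, f x * ENNReal.ofReal (exp (-‖x‖ ^ 2)) ∂μ
      = ∫⁻ x, (∫⁻ s in Set.Ioi 0, F (x, s)) ∂μ := by simp_rw [integral_s]
    _ = ∫⁻ s in Set.Ioi 0, ∫⁻ x, F (x, s) ∂μ :=
      lintegral_lintegral_swap (f := fun x s => F (x, s)) hF.aemeasurable
    _ = _ := by simp_rw [integral_x]

section Homogeneous

variable {E : Type*} [NormedAddCommGroup E] [NormedSpace ℝ E] [FiniteDimensional ℝ E]
  [MeasurableSpace E] [BorelSpace E] (μ : Measure E) [μ.IsAddHaarMeasure] {g : E → ℝ} {d : ℕ}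

lemma setIntegral_ball_eq_pow_mul_of_homogeneous
    (hg : ∀ c : ℝ, 0 < c → ∀ x, g (c • x) = c ^ d * g x) {r : ℝ} (hr : 0 < r) :
    ∫ x in ball 0 r, g x ∂μ = r ^ (finrank ℝ E + d) * ∫ x in ball 0 1, g x ∂μ := by
  have h := Measure.setIntegral_comp_smul_of_pos μ g (ball 0 1) hr
  rw [smul_unitBall_of_pos hr, smul_eq_mul] at h
  simp_rw [hg r hr, integral_const_mul] at h
  rw [pow_add, mul_assoc, h]
  field_simp

theorem integral_mul_exp_neg_norm_sq_of_homogeneous (hg_cont : Continuous g) (hg_nonneg : 0 ≤ g)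
    (hg : ∀ c : ℝ, 0 < c → ∀ x, g (c • x) = c ^ d * g x) :
    ∫ x, g x * exp (-‖x‖ ^ 2) ∂μ =
      Gamma ((finrank ℝ E + d) / 2 + 1) * ∫ x in ball 0 1, g x ∂μ := by
  set m : ℝ := finrank ℝ E + d
  set I := ∫ x in ball 0 1, g x ∂μ
  have lintegral_ball (s : ℝ) (hs : 0 < s) :
      ENNReal.ofReal (exp (-s)) * ∫⁻ x in ball 0 √s, ENNReal.ofReal (g x) ∂μ =
        ENNReal.ofReal (exp (-s) * s ^ (m / 2) * I) := by
    have hint : IntegrableOn g (ball 0 √s) μ :=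
      (hg_cont.locallyIntegrable.integrableOn_isCompact (isCompact_closedBall 0 √s)).mono_set
        ball_subset_closedBall
    rw [← ofReal_integral_eq_lintegral_ofReal hint (ae_of_all _ hg_nonneg),
      setIntegral_ball_eq_pow_mul_of_homogeneous μ hg (sqrt_pos.2 hs),
      ← ENNReal.ofReal_mul (exp_pos _).le, mul_assoc, sqrt_eq_rpow, ← rpow_natCast,
      ← rpow_mul hs.le]
    congr 4
    push_cast
    ring
  calc ∫ x, g x * exp (-‖x‖ ^ 2) ∂μ
      = (∫⁻ x, ENNReal.ofReal (g x) * ENNReal.ofReal (exp (-‖x‖ ^ 2)) ∂μ).toReal := by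
        rw [integral_eq_lintegral_of_nonneg_ae
          (ae_of_all _ fun x => mul_nonneg (hg_nonneg x) (exp_pos _).le) (by fun_prop)]
        simp_rw [ENNReal.ofReal_mul (hg_nonneg _)]
    _ = (∫⁻ s in Set.Ioi 0, ENNReal.ofReal (exp (-s) * s ^ (m / 2) * I)).toReal := by
        rw [lintegral_mul_exp_neg_norm_sq μ hg_cont.measurable.ennreal_ofReal,
          setLIntegral_congr_fun measurableSet_Ioi lintegral_ball]
    _ = ∫ s in Set.Ioi 0, exp (-s) * s ^ (m / 2) * I := by
        rw [integral_eq_lintegral_of_nonneg_ae _ (by fun_prop)]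
        filter_upwards [ae_restrict_mem measurableSet_Ioi] with s (hs : 0 < s)
        have : 0 ≤ I := setIntegral_nonneg measurableSet_ball fun x _ => hg_nonneg x
        positivity
    _ = Gamma (m / 2 + 1) * I := by
        rw [integral_mul_const, Gamma_eq_integral (by positivity), add_sub_cancel_right]

end Homogeneous

lemma integral_even_pow_mul_exp_neg_sq (k : ℕ) :
    ∫ t : ℝ, t ^ (2 * k) * exp (-t ^ 2) = Gamma (k + 1 / 2) := by
  have h := integral_rpow_mul_exp_neg_rpow two_pos (q := 2 * k)
    (neg_one_lt_zero.trans_le (by positivity))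
  have heven : ∫ t : ℝ, t ^ (2 * k) * exp (-t ^ 2) = ∫ t : ℝ, |t| ^ (2 * k) * exp (-|t| ^ 2) := by
    simp_rw [pow_mul, sq_abs]
  rw [heven, integral_comp_abs (f := fun t => t ^ (2 * k) * exp (-t ^ 2)),
    ← setIntegral_congr_fun measurableSet_Ioi fun t _ => ?_, h]
  · rw [show ((2 : ℝ) * k + 1) / 2 = k + 1 / 2 by ring]
    ring
  · simp only [← rpow_natCast, Nat.cast_mul, Nat.cast_ofNat]

lemma integral_prod_mul_exp_neg_norm_sq {ι : Type*} [Fintype ι] (f : ι → ℝ → ℝ) :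
    ∫ x : EuclideanSpace ℝ ι, (∏ i, f i (x i)) * exp (-‖x‖ ^ 2) =
      ∏ i, ∫ t, f i t * exp (-t ^ 2) := by
  rw [← (PiLp.volume_preserving_toLp ι).integral_comp
      (MeasurableEquiv.toLp 2 _).measurableEmbedding,
    ← integral_fintype_prod_volume_eq_prod]
  congr 1 with y
  simp only [EuclideanSpace.norm_sq_eq, Real.norm_eq_abs, sq_abs, ← sum_neg_distrib, exp_sum,
    prod_mul_distrib]

lemma Gamma_half_add_nat_mul_two_pow {s : ℝ} (hs : 0 ≤ s) (A : ℕ) :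
    Gamma ((s + 2 * A) / 2 + 1) * 2 ^ A = Gamma (s / 2 + 1) * ∏ j ∈ Icc 1 A, (s + 2 * j) := by
  induction A with
  | zero => simp
  | succ A ih =>
    rw [prod_Icc_succ_top (by omega), ← mul_assoc, ← ih, show (s + 2 * ↑(A + 1)) / 2 + 1 =
      ((s + 2 * A) / 2 + 1) + 1 by push_cast; ring, Gamma_add_one (by positivity)]
    push_cast
    ring

lemma Gamma_mul_setIntegral_ball_prod_pow (n : ℕ) (α : Fin n → ℕ) :
    Gamma ((n + 2 * ∑ i, α i : ℕ) / 2 + 1) *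
        ∫ x in ball (0 : EuclideanSpace ℝ (Fin n)) 1, ∏ i, x i ^ (2 * α i) =
      ∏ i, Gamma (α i + 1 / 2) := by
  have homogeneous (c : ℝ) (_ : 0 < c) (x : EuclideanSpace ℝ (Fin n)) :
      ∏ i, (c • x) i ^ (2 * α i) = c ^ (2 * ∑ i, α i) * ∏ i, x i ^ (2 * α i) := by
    simp only [PiLp.smul_apply, smul_eq_mul, mul_pow, prod_mul_distrib, prod_pow_eq_pow_sum,
      mul_sum]
  have h := integral_mul_exp_neg_norm_sq_of_homogeneous volume
    (g := fun x : EuclideanSpace ℝ (Fin n) => ∏ i, x i ^ (2 * α i)) (by fun_prop)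
    (fun x => prod_nonneg fun i _ => by rw [pow_mul]; positivity) homogeneous
  simp_rw [integral_prod_mul_exp_neg_norm_sq (fun i t => t ^ (2 * α i)),
    integral_even_pow_mul_exp_neg_sq, finrank_euclideanSpace_fin] at h
  rw [h, Nat.cast_add]

lemma Gamma_mul_volume_unitBall (n : ℕ) :
    Gamma (n / 2 + 1) * (volume (ball (0 : EuclideanSpace ℝ (Fin n)) 1)).toReal = √π ^ n := by
  simpa [-one_div, Gamma_one_half_eq, Measure.real] using Gamma_mul_setIntegral_ball_prod_pow n 0

theorem wallis_formula_ball (n : ℕ) (α : Fin n → ℕ) :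
    (1 / (volume (Metric.ball (0 : EuclideanSpace ℝ (Fin n)) 1)).toReal) *
      ∫ x in Metric.ball (0 : EuclideanSpace ℝ (Fin n)) 1,
        (∏ i : Fin n, (x i) ^ (2 * α i)) =
      (∏ i ∈ Finset.univ.filter (fun i => α i ≠ 0), (Nat.doubleFactorial (2 * α i - 1) : ℝ)) /
        ∏ j ∈ Finset.Icc 1 (∑ i, α i), ((n : ℝ) + 2 * j) := by
  set I := ∫ x in ball (0 : EuclideanSpace ℝ (Fin n)) 1, ∏ i, x i ^ (2 * α i)
  set V := (volume (ball (0 : EuclideanSpace ℝ (Fin n)) 1)).toReal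
  set N := ∏ i, ((2 * α i - 1).doubleFactorial : ℝ)
  set D := ∏ j ∈ Icc 1 (∑ i, α i), ((n : ℝ) + 2 * j)
  have hvolume : Gamma (n / 2 + 1) * V = √π ^ n := Gamma_mul_volume_unitBall n
  have hmoment : Gamma ((n + 2 * ∑ i, α i : ℕ) / 2 + 1) * I * 2 ^ ∑ i, α i = N * √π ^ n := by
    rw [Gamma_mul_setIntegral_ball_prod_pow n α]
    simp_rw [Gamma_nat_add_half, prod_div_distrib, prod_mul_distrib, prod_const, card_univ,
      Fintype.card_fin, prod_pow_eq_pow_sum]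
    exact div_mul_cancel₀ _ (by positivity)
  have hden := Gamma_half_add_nat_mul_two_pow (Nat.cast_nonneg n) (∑ i, α i)
  have hfilter : ∏ i ∈ univ.filter (fun i => α i ≠ 0), ((2 * α i - 1).doubleFactorial : ℝ) = N :=
    prod_filter_of_ne fun i _ h hi => h (by simp [hi])
  have hΓ : Gamma (n / 2 + 1) ≠ 0 := (Gamma_pos_of_pos (by positivity)).ne'
  have hV : V ≠ 0 := right_ne_zero_of_mul (a := Gamma (n / 2 + 1)) (hvolume ▸ by positivity)
  have hD : D ≠ 0 := prod_ne_zero_iff.2 fun j hj => by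
    have : (1 : ℝ) ≤ j := by exact_mod_cast (mem_Icc.1 hj).1
    positivity
  push_cast at hmoment hden
  rw [hfilter, one_div_mul_eq_div, div_eq_div_iff hV hD]
  refine mul_left_cancel₀ hΓ ?_
  linear_combination (-I) * hden + hmoment - N * hvolume
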